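/- Consider DSG-1 (DSG with stepsizes s_k ∈ [η_k, β_k], η_k := min{η, ‖A(z_k)‖ + ‖z_k‖}, β_k := max{β, σ(z_k) + ‖z_k‖}, β > η > 0), generating an infinite dual sequence {(y_k,c_k)}. Assume (Γ₀): there exists R > 0 with r_k ≤ R σ(z_k) for all k, and assume the sequences {σ(z_k)} and {z_k} are bounded (as guaranteed by the boundedness result for σ(z_k)). If the dual solution set S(D) is nonempty, then the dual sequence {(y_k,c_k)} is bounded. -/

import Mathlib

open Filter Topology Bornology

noncomputable section

/-- A real normed space is *reflexive* if the canonical embedding into its double dual is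
surjective. -/
def IsReflexiveSpace (X : Type*) [NormedAddCommGroup X] [NormedSpace ℝ X] : Prop :=
  Function.Surjective ⇑(NormedSpace.inclusionInDoubleDual ℝ X)

/-- A set is *weakly compact* if it is compact in the weak topology. -/
def WCompact {X : Type*} [NormedAddCommGroup X] [NormedSpace ℝ X] (S : Set X) : Prop :=
  IsCompact (show Set (WeakSpace ℝ X) from S)

/-- A set is *weakly open* if it is open in the weak topology. -/
def WOpen {X : Type*} [NormedAddCommGroup X] [NormedSpace ℝ X] (S : Set X) : Prop :=
  IsOpen (show Set (WeakSpace ℝ X) from S)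

/-- A set of pairs is *weakly compact* if it is compact in the product of the weak
topologies. -/
def WCompact2 {X H : Type*} [NormedAddCommGroup X] [NormedSpace ℝ X]
    [NormedAddCommGroup H] [NormedSpace ℝ H] (S : Set (X × H)) : Prop :=
  IsCompact (show Set (WeakSpace ℝ X × WeakSpace ℝ H) from S)

/-- *Weak lower semicontinuity* of an extended-real-valued function. -/
def WLsc {X : Type*} [NormedAddCommGroup X] [NormedSpace ℝ X] (g : X → EReal) : Prop :=
  LowerSemicontinuous (show WeakSpace ℝ X → EReal from g)

/-- Weak lower semicontinuity of a function of two variables, w.r.t. the product of the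
weak topologies. -/
def WLsc2 {X H : Type*} [NormedAddCommGroup X] [NormedSpace ℝ X]
    [NormedAddCommGroup H] [NormedSpace ℝ H] (g : X × H → EReal) : Prop :=
  LowerSemicontinuous (show WeakSpace ℝ X × WeakSpace ℝ H → EReal from g)

/-- Weak upper semicontinuity of a real-valued function. -/
def WUsc {X : Type*} [NormedAddCommGroup X] [NormedSpace ℝ X] (g : X → ℝ) : Prop :=
  UpperSemicontinuous (show WeakSpace ℝ X → ℝ from g)

/-- Weak (sequential) convergence of a sequence: `L (u n) → L l` for every continuous
linear functional `L`. -/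
def WSeqConv {X : Type*} [NormedAddCommGroup X] [NormedSpace ℝ X] (u : ℕ → X) (l : X) : Prop :=
  ∀ L : StrongDual ℝ X, Tendsto (fun n => L (u n)) atTop (𝓝 (L l))

/-- Weak level-compactness of a dualizing parameterization `f`. -/
def WLevelCompact {X H : Type*} [NormedAddCommGroup X] [NormedSpace ℝ X]
    [NormedAddCommGroup H] [NormedSpace ℝ H] (f : X → H → EReal) : Prop :=
  ∀ (z₀ : H) (α : ℝ), ∃ U : Set H, WOpen U ∧ z₀ ∈ U ∧
    ∃ B : Set X, WCompact B ∧ ∀ z ∈ U, {x : X | f x z ≤ (α : EReal)} ⊆ B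

section Lagrangian

variable {X H : Type*} [NormedAddCommGroup H] [InnerProductSpace ℝ H]

/-- The augmented Lagrangian integrand `(x,z) ↦ f(x,z) − ⟨A z, y⟩ + c σ(z)`. -/
def lagr (f : X → H → EReal) (σ : H → EReal) (A : H → H) (y : H) (c : ℝ) (x : X) (z : H) :
    EReal :=
  f x z - ((inner ℝ (A z) y : ℝ) : EReal) + (c : EReal) * σ z

/-- The dual function `q(y,c) = inf_{x,z} (f(x,z) − ⟨A z, y⟩ + c σ(z))`. -/
def dualq (f : X → H → EReal) (σ : H → EReal) (A : H → H) (y : H) (c : ℝ) : EReal :=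
  ⨅ (x : X) (z : H), lagr f σ A y c x z

/-- The dual optimal value `M_D = sup_{(y,c) ∈ H × ℝ₊} q(y,c)`. -/
def MD (f : X → H → EReal) (σ : H → EReal) (A : H → H) : EReal :=
  ⨆ (y : H) (c : ℝ) (_ : 0 ≤ c), dualq f σ A y c

/-- `(y,c)` is a solution of the dual problem. -/
def DualSol (f : X → H → EReal) (σ : H → EReal) (A : H → H) (y : H) (c : ℝ) : Prop :=
  0 ≤ c ∧ ∀ (y' : H) (c' : ℝ), 0 ≤ c' → dualq f σ A y' c' ≤ dualq f σ A y c

/-- The function `γ_n(z) = β(z) − ⟨A z, ȳ⟩ + n σ(z)`, where `β(z) = inf_x f(x,z)`. -/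
def gam (f : X → H → EReal) (σ : H → EReal) (A : H → H) (ybar : H) (n : ℕ) (z : H) : EReal :=
  (⨅ x : X, f x z) - ((inner ℝ (A z) ybar : ℝ) : EReal) + (n : EReal) * σ z

end Lagrangian

/-- The primal optimal value `M_P = inf_x φ(x)`. -/
def MP {X : Type*} (φ : X → EReal) : EReal := ⨅ x, φ x

/-! Let `(ȳ, c̄)` be a dual solution. Comparing the near-minimality of `(x_k, z_k)` for the
Lagrangian at `(y_k, c_k)` with the minimality of `q(ȳ, c̄)` gives
`(c_k − c̄) σ(z_k) − r_k ≤ ⟪A z_k, y_k − ȳ⟫`, so `A z_k` is an approximate supergradient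
direction and, with `r_k ≤ R σ(z_k)` and bounded steps,
`‖y_{k+1} − ȳ‖² ≤ ‖y_k − ȳ‖² + 2 s_k σ(z_k) (C − c_k)` for a constant `C`.
Since `c_k ≥ c_0 + ∑_{j<k} s_j σ(z_j)`, either `c_k` stays below `C + 1` or from then on the
distance decreases by `2 s_k σ(z_k)` per step; either way `∑ s_k σ(z_k) < ∞`, which bounds both
the increments of `c_k` and the growth of `‖y_k − ȳ‖²`. -/

section Lyapunov

open Finset

theorem sub_le_mul_sum_range_of_succ_sub_le {u t : ℕ → ℝ} {K : ℝ}
    (h : ∀ k, u (k + 1) - u k ≤ K * t k) (n : ℕ) :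
    u n - u 0 ≤ K * ∑ k ∈ range n, t k := by
  rw [← sum_range_sub, mul_sum]
  exact sum_le_sum fun k _ => h k

variable {d t c : ℕ → ℝ} {C : ℝ}

theorem bddAbove_sum_range_of_descent (hd : ∀ k, 0 ≤ d k) (ht : ∀ k, 0 ≤ t k)
    (hc : ∀ k, c k + t k ≤ c (k + 1))
    (hdesc : ∀ k, d (k + 1) ≤ d k + 2 * t k * (C - c k)) :
    BddAbove (Set.range fun n => ∑ k ∈ range n, t k) := by
  have hcP : ∀ n, c 0 + ∑ k ∈ range n, t k ≤ c n := fun n => by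
    linarith [sub_le_mul_sum_range_of_succ_sub_le (u := fun k => -c k) (t := t) (K := -1)
      (fun k => by linarith [hc k]) n]
  have hPmono : Monotone fun n => ∑ k ∈ range n, t k :=
    monotone_nat_of_le_succ fun n => by simp only [sum_range_succ]; linarith [ht n]
  by_cases hC : ∃ k₀, C + 1 ≤ c k₀
  · obtain ⟨k₀, hk₀⟩ := hC
    have hcmono : Monotone c := monotone_nat_of_le_succ fun k => by linarith [hc k, ht k]
    have hfar : ∀ n, k₀ ≤ n →
        d n + 2 * ∑ k ∈ range n, t k ≤ d k₀ + 2 * ∑ k ∈ range k₀, t k := by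
      intro n hn
      induction n, hn using Nat.le_induction with
      | base => exact le_rfl
      | succ n hn ih =>
        have hcn : C + 1 ≤ c n := hk₀.trans (hcmono hn)
        have hdrop : 2 * t n * (C - c n) ≤ -2 * t n := by nlinarith [ht n]
        rw [sum_range_succ]
        linarith [hdesc n]
    refine ⟨∑ k ∈ range k₀, t k + d k₀ / 2, ?_⟩
    rintro _ ⟨n, rfl⟩
    rcases le_total n k₀ with hn | hn
    · linarith [hPmono hn, hd k₀]
    · linarith [hfar n hn, hd n]
  · simp only [not_exists, not_le] at hC
    exact ⟨C + 1 - c 0, by rintro _ ⟨n, rfl⟩; linarith [hcP n, hC n]⟩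

theorem bddAbove_range_of_descent {B : ℝ} (hd : ∀ k, 0 ≤ d k) (ht : ∀ k, 0 ≤ t k)
    (hc : ∀ k, c k + t k ≤ c (k + 1)) (hcB : ∀ k, c (k + 1) ≤ c k + B * t k) (hB : 0 ≤ B)
    (hdesc : ∀ k, d (k + 1) ≤ d k + 2 * t k * (C - c k)) :
    BddAbove (Set.range d) ∧ BddAbove (Set.range c) := by
  obtain ⟨T, hT⟩ := bddAbove_sum_range_of_descent hd ht hc hdesc
  have hPT : ∀ n, ∑ k ∈ range n, t k ≤ T := fun n => hT ⟨n, rfl⟩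
  have hT0 : 0 ≤ T := by simpa using hPT 0
  have hcmono : Monotone c := monotone_nat_of_le_succ fun k => by linarith [hc k, ht k]
  set K := 2 * max (C - c 0) 0
  have hdK : ∀ k, d (k + 1) - d k ≤ K * t k := fun k => by
    have : 2 * t k * (C - c k) ≤ K * t k := by
      nlinarith [ht k, le_max_left (C - c 0) 0, hcmono (Nat.zero_le k)]
    linarith [hdesc k]
  refine ⟨⟨d 0 + K * T, ?_⟩, ⟨c 0 + B * T, ?_⟩⟩ <;> rintro _ ⟨n, rfl⟩
  · have hK : 0 ≤ K := by positivity
    nlinarith [sub_le_mul_sum_range_of_succ_sub_le hdK n, hPT n]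
  · nlinarith [sub_le_mul_sum_range_of_succ_sub_le (u := c) (t := t) (K := B)
      (fun k => by linarith [hcB k]) n, hPT n]

end Lyapunov

theorem norm_sub_smul_sub_sq_le {H : Type*} [NormedAddCommGroup H] [InnerProductSpace ℝ H]
    {g u v : H} {s a c cb r R S M : ℝ} (hs : 0 ≤ s) (hsS : s ≤ S) (hg : ‖g‖ ≤ a) (haM : a ≤ M)
    (hinner : (c - cb) * a - r ≤ inner ℝ g (u - v)) (hr : r ≤ R * a) :
    ‖u - s • g - v‖ ^ 2 ≤ ‖u - v‖ ^ 2 + 2 * (s * a) * (cb + R + S * M / 2 - c) := by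
  have hexp : ‖u - s • g - v‖ ^ 2
      = ‖u - v‖ ^ 2 - 2 * s * inner ℝ g (u - v) + (s * ‖g‖) ^ 2 := by
    rw [sub_right_comm, norm_sub_sq_real, real_inner_smul_right, norm_smul,
      Real.norm_of_nonneg hs, real_inner_comm]
    ring
  have hsa : 0 ≤ s * a := mul_nonneg hs ((norm_nonneg g).trans hg)
  have hsg : (s * ‖g‖) ^ 2 ≤ (s * a) * (S * M) := by
    rw [sq]
    exact mul_le_mul (mul_le_mul_of_nonneg_left hg hs)
      (mul_le_mul hsS (hg.trans haM) (norm_nonneg g) (hs.trans hsS)) (by positivity) hsa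
  rw [hexp]
  nlinarith [mul_le_mul_of_nonneg_left hinner hs, mul_le_mul_of_nonneg_left hr hs]

section Duality

variable {X H : Type*} [NormedAddCommGroup H] [InnerProductSpace ℝ H]
  {f : X → H → EReal} {σ : H → EReal} {A : H → H}

theorem dualq_le_lagr (y : H) (c : ℝ) (x : X) (z : H) :
    dualq f σ A y c ≤ lagr f σ A y c x z :=
  iInf₂_le (f := lagr f σ A y c) x z

theorem dualq_lt_top {φ : X → EReal} (hSD : MP φ = MD f σ A) (hφ : ∃ x, φ x ≠ ⊤)
    {y : H} {c : ℝ} (hc : 0 ≤ c) : dualq f σ A y c < ⊤ := by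
  obtain ⟨x₀, hx₀⟩ := hφ
  calc dualq f σ A y c ≤ MD f σ A := le_iSup₂_of_le y c (le_iSup_of_le hc le_rfl)
    _ = MP φ := hSD.symm
    _ ≤ φ x₀ := iInf_le φ x₀
    _ < ⊤ := hx₀.lt_top

theorem lagr_eq_coe {y : H} {c : ℝ} {x : X} {z : H} {F s : ℝ} (hF : f x z = F) (hs : σ z = s) :
    lagr f σ A y c x z = ((F - inner ℝ (A z) y + c * s : ℝ) : EReal) := by
  rw [lagr, hF, hs]
  norm_cast

theorem lagr_eq_top {y : H} {c : ℝ} {x : X} {z : H} {s : ℝ} (hF : f x z = ⊤) (hs : σ z = s) :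
    lagr f σ A y c x z = ⊤ := by
  rw [lagr, hF, hs, EReal.top_sub_coe, ← EReal.coe_mul, EReal.top_add_coe]

theorem DualSol.sub_mul_sub_le_inner {yb : H} {cb : ℝ} (hsol : DualSol f σ A yb cb)
    (hqb : dualq f σ A yb cb < ⊤) {x : X} {z y : H} {c r s : ℝ} (hc : 0 ≤ c)
    (hf : f x z ≠ ⊥) (hs : σ z = s) (hxz : lagr f σ A y c x z ≤ dualq f σ A y c + r) :
    (c - cb) * s - r ≤ inner ℝ (A z) (y - yb) := by
  have hq := hsol.2 y c hc
  have hle : lagr f σ A y c x z ≤ lagr f σ A yb cb x z + r :=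
    hxz.trans (add_le_add_left (hq.trans (dualq_le_lagr yb cb x z)) _)
  have hlt : lagr f σ A y c x z < ⊤ :=
    hxz.trans_lt (EReal.add_lt_top (hq.trans_lt hqb).ne (EReal.coe_ne_top r))
  obtain ⟨F, hF⟩ : ∃ F : ℝ, f x z = F :=
    ⟨_, (EReal.coe_toReal (fun h => hlt.ne (lagr_eq_top h hs)) hf).symm⟩
  rw [lagr_eq_coe hF hs, lagr_eq_coe hF hs, ← EReal.coe_add, EReal.coe_le_coe_iff] at hle
  rw [inner_sub_right]
  linarith

end Duality

theorem dsg1_dual_sequence_bounded_general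
    {X H : Type*}
    [NormedAddCommGroup H] [InnerProductSpace ℝ H]
    (φ : X → EReal)
    (hφproper : (∀ x, φ x ≠ ⊥) ∧ (∃ x, φ x ≠ ⊤))
    (f : X → H → EReal)
    (hfproper : (∀ x z, f x z ≠ ⊥) ∧ (∃ x z, f x z ≠ ⊤))
    (σ : H → EReal)
    (hσpos : ∀ z, 0 ≤ σ z)
    (A : H → H)
    (hA0 : ∀ z, (‖A z‖ : EReal) ≤ σ z)
    (hSD : MP φ = MD f σ A)
    (x : ℕ → X) (z y : ℕ → H) (c st a r σz : ℕ → ℝ)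
    (hσz : ∀ k, (σz k : EReal) = σ (z k))
    (abar : ℝ) (habar : 0 < abar) (ha : ∀ k, 0 < a k ∧ a k < abar)
    (hst : ∀ k, 0 < st k)
    (hc0 : 0 ≤ c 0)
    (hxz : ∀ k, lagr f σ A (y k) (c k) (x k) (z k) ≤ dualq f σ A (y k) (c k) + (r k : EReal))
    (hy : ∀ k, y (k + 1) = y k - st k • A (z k))
    (hc : ∀ k, c (k + 1) = c k + (a k + 1) * st k * σz k)
    (η βs : ℝ)
    (hstep : ∀ k, min η (‖A (z k)‖ + ‖z k‖) ≤ st k ∧ st k ≤ max βs (σz k + ‖z k‖))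
    (R : ℝ) (hΓ : ∀ k, r k ≤ R * σz k)
    (hσzbd : ∃ M : ℝ, ∀ k, σz k ≤ M) (hzbd : ∃ M : ℝ, ∀ k, ‖z k‖ ≤ M)
    (hsol : ∃ (yd : H) (cd : ℝ), DualSol f σ A yd cd) :
    ∃ M : ℝ, ∀ k, ‖y k‖ + |c k| ≤ M := by
  obtain ⟨yb, cb, hsol⟩ := hsol
  obtain ⟨Mσ, hMσ⟩ := hσzbd
  obtain ⟨Mz, hMz⟩ := hzbd
  have hσz0 : ∀ k, 0 ≤ σz k := fun k => EReal.coe_nonneg.mp (hσz k ▸ hσpos (z k))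
  have hAz : ∀ k, ‖A (z k)‖ ≤ σz k := fun k => EReal.coe_le_coe_iff.mp (hσz k ▸ hA0 (z k))
  have hstS : ∀ k, st k ≤ max βs (Mσ + Mz) := fun k =>
    (hstep k).2.trans (max_le_max le_rfl (add_le_add (hMσ k) (hMz k)))
  have ht : ∀ k, 0 ≤ st k * σz k := fun k => mul_nonneg (hst k).le (hσz0 k)
  have hcinc : ∀ k, c k + st k * σz k ≤ c (k + 1) := fun k => by
    nlinarith [hc k, ht k, (ha k).1]
  have hck0 : ∀ k, 0 ≤ c k :=
    fun k => hc0.trans (monotone_nat_of_le_succ (fun k => by linarith [hcinc k, ht k])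
      (Nat.zero_le k))
  have hqb := dualq_lt_top (y := yb) hSD hφproper.2 hsol.1
  have hdesc : ∀ k, ‖y (k + 1) - yb‖ ^ 2 ≤ ‖y k - yb‖ ^ 2
      + 2 * (st k * σz k) * (cb + R + max βs (Mσ + Mz) * Mσ / 2 - c k) := fun k => by
    rw [hy k]
    exact norm_sub_smul_sub_sq_le (hst k).le (hstS k) (hAz k) (hMσ k)
      (hsol.sub_mul_sub_le_inner hqb (hck0 k) (hfproper.1 _ _) (hσz k).symm (hxz k)) (hΓ k)
  obtain ⟨⟨Md, hMd⟩, ⟨Mc, hMc⟩⟩ := bddAbove_range_of_descent (d := fun k => ‖y k - yb‖ ^ 2)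
    (fun k => sq_nonneg _) ht hcinc
    (fun k => by nlinarith [hc k, ht k, (ha k).2]) (by linarith : 0 ≤ abar + 1) hdesc
  refine ⟨‖yb‖ + (Md + 1) + Mc, fun k => ?_⟩
  have hyk : ‖y k‖ ≤ ‖yb‖ + ‖y k - yb‖ := norm_le_norm_add_norm_sub' (y k) yb
  have hsq : ‖y k - yb‖ ≤ ‖y k - yb‖ ^ 2 + 1 := by nlinarith [sq_nonneg (‖y k - yb‖ - 1)]
  rw [abs_of_nonneg (hck0 k)]
  linarith [hMd ⟨k, rfl⟩, hMc ⟨k, rfl⟩]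

/-- For DSG-1, under `(Γ₀)` and boundedness of `{σ(z_k)}` and `{z_k}`,
if the dual solution set is nonempty then the dual sequence `{(y_k,c_k)}` is bounded. -/
theorem dsg1_dual_sequence_bounded
    {X H : Type*} [NormedAddCommGroup X] [NormedSpace ℝ X] [CompleteSpace X]
    [NormedAddCommGroup H] [InnerProductSpace ℝ H] [CompleteSpace H]
    (hrefl : IsReflexiveSpace X)
    (φ : X → EReal)
    (hφproper : (∀ x, φ x ≠ ⊥) ∧ (∃ x, φ x ≠ ⊤))
    (hφwlsc : WLsc φ)
    (hφlev : ∀ α : ℝ, WCompact {x : X | φ x ≤ (α : EReal)})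
    (f : X → H → EReal)
    (hdual : ∀ x, f x 0 = φ x)
    (hfproper : (∀ x z, f x z ≠ ⊥) ∧ (∃ x z, f x z ≠ ⊤))
    (hflsc : WLsc2 fun p : X × H => f p.1 p.2)
    (hflev : WLevelCompact f)
    (σ : H → EReal)
    (hσpos : ∀ z, 0 ≤ σ z)
    (hσ0 : σ 0 = 0)
    (hσargmin : ∀ z, σ z = 0 → z = 0)
    (hσwlsc : WLsc σ)
    (A : H → H)
    (hA0 : ∀ z, (‖A z‖ : EReal) ≤ σ z)
    (hA1 : ∀ y : H, WUsc fun z => (inner ℝ (A z) y : ℝ))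
    (hSD : MP φ = MD f σ A)
    (x : ℕ → X) (z y : ℕ → H) (c st a r σz : ℕ → ℝ)
    (hσz : ∀ k, (σz k : EReal) = σ (z k))
    (abar : ℝ) (habar : 0 < abar) (ha : ∀ k, 0 < a k ∧ a k < abar)
    (hst : ∀ k, 0 < st k)
    (hrpos : ∀ k, 0 ≤ r k) (hrlim : Tendsto r atTop (𝓝 0))
    (hc0 : 0 ≤ c 0) (hq0 : dualq f σ A (y 0) (c 0) ≠ ⊥)
    (hxz : ∀ k, lagr f σ A (y k) (c k) (x k) (z k) ≤ dualq f σ A (y k) (c k) + (r k : EReal))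
    (hy : ∀ k, y (k + 1) = y k - st k • A (z k))
    (hc : ∀ k, c (k + 1) = c k + (a k + 1) * st k * σz k)
    (η βs : ℝ) (hηpos : 0 < η) (hηβ : η < βs)
    (hstep : ∀ k, min η (‖A (z k)‖ + ‖z k‖) ≤ st k ∧ st k ≤ max βs (σz k + ‖z k‖))
    (hz : ∀ k, z k ≠ 0)
    (R : ℝ) (hR : 0 < R) (hΓ : ∀ k, r k ≤ R * σz k)
    (hσzbd : ∃ M : ℝ, ∀ k, σz k ≤ M) (hzbd : ∃ M : ℝ, ∀ k, ‖z k‖ ≤ M)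
    (hsol : ∃ (yd : H) (cd : ℝ), DualSol f σ A yd cd) :
    ∃ M : ℝ, ∀ k, ‖y k‖ + |c k| ≤ M :=
  dsg1_dual_sequence_bounded_general φ hφproper f hfproper σ hσpos A hA0 hSD x z y c st a r σz hσz
    abar habar ha hst hc0 hxz hy hc η βs hstep R hΓ hσzbd hzbd hsol
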